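/- Every pair-symmetric grid-labelled graph is separable: if G is a grid-labelled graph of type (a,b) with m ≥ 1 edges such that for every diagonal edge {(i,j),(k,l)} of G the counterpart pair {(k,j),(i,l)} is also an edge of G, then ρ(G) = L(G)/(2m) is separable. -/

import Mathlib

open Matrix Kronecker ComplexOrder

/-- The partial transpose of a grid-labelled graph. -/
def PartialTranspose {a b : ℕ} (G : SimpleGraph (Fin a × Fin b)) :
    SimpleGraph (Fin a × Fin b) where
  Adj v w := G.Adj (w.1, v.2) (v.1, w.2)
  symm := by
    refine ⟨fun v w h => ?_⟩
    exact G.adj_symm h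
  loopless := by
    refine ⟨fun v h => ?_⟩
    exact G.irrefl h

instance {a b : ℕ} (G : SimpleGraph (Fin a × Fin b)) [h : DecidableRel G.Adj] :
    DecidableRel (PartialTranspose G).Adj :=
  fun v w => h (w.1, v.2) (v.1, w.2)

/-- Separability of a bipartite density matrix. -/
def MatSeparable {a b : ℕ} (ρ : Matrix (Fin a × Fin b) (Fin a × Fin b) ℂ) : Prop :=
  ∃ (n : ℕ) (A : Fin n → Matrix (Fin a) (Fin a) ℂ) (B : Fin n → Matrix (Fin b) (Fin b) ℂ),
    (∀ i, (A i).PosSemidef) ∧ (∀ i, (B i).PosSemidef) ∧ ρ = ∑ i, (A i) ⊗ₖ (B i)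

/-- The density matrix of a grid-labelled graph: `L(G)/(2m)`. -/
noncomputable def densityMatrix {a b : ℕ} (G : SimpleGraph (Fin a × Fin b))
    [DecidableRel G.Adj] : Matrix (Fin a × Fin b) (Fin a × Fin b) ℂ :=
  ((1 : ℂ) / (2 * (G.edgeFinset.card : ℂ))) • G.lapMatrix ℂ

/-- Degree criterion. -/
def DegreeCriterion {a b : ℕ} (G : SimpleGraph (Fin a × Fin b)) [DecidableRel G.Adj] : Prop :=
  ∀ v, G.degree v = (PartialTranspose G).degree v

set_option linter.unusedSectionVars false
set_option maxHeartbeats 1000000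

section aux

variable {V : Type*} [Fintype V] [DecidableEq V]

/-- indicator vector -/
def s8ev (v : V) : V → ℂ := fun x => if x = v then 1 else 0

/-- rank-one `u uᵀ` matrix -/
def s8OM (u : V → ℂ) : Matrix V V ℂ := Matrix.vecMulVec u u

lemma s8OM_psd (u : V → ℂ) (hu : ∀ x, (starRingEnd ℂ) (u x) = u x) :
    (s8OM u).PosSemidef := by
  rw [posSemidef_iff_dotProduct_mulVec]
  constructor
  · ext x y
    simp only [s8OM, conjTranspose_apply, vecMulVec_apply, star_mul', RingHom.coe_coe]
    rw [show (star (u x) : ℂ) = (starRingEnd ℂ) (u x) from rfl,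
        show (star (u y) : ℂ) = (starRingEnd ℂ) (u y) from rfl, hu, hu, mul_comm]
  · intro x
    have h1 : s8OM u *ᵥ x = fun i => u i * (u ⬝ᵥ x) := by
      funext i
      simp [s8OM, mulVec, dotProduct, vecMulVec_apply, mul_assoc, Finset.mul_sum]
    rw [h1]
    have h2 : (star x ⬝ᵥ fun i => u i * (u ⬝ᵥ x)) =
        (star x ⬝ᵥ u) * (u ⬝ᵥ x) := by
      simp only [dotProduct, Finset.sum_mul]
      exact Finset.sum_congr rfl fun i _ => by ring
    have h3 : star x ⬝ᵥ u = (starRingEnd ℂ) (u ⬝ᵥ x) := by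
      simp only [dotProduct, map_sum]
      exact Finset.sum_congr rfl fun i _ => by
        rw [_root_.map_mul, hu]; simp [mul_comm]
    rw [h2, h3, Complex.conj_mul']
    positivity
lemma s8ev_real (v : V) (x : V) : (starRingEnd ℂ) (s8ev v x) = s8ev v x := by
  simp [s8ev, apply_ite]

lemma psd_e (v : V) : (s8OM (s8ev v)).PosSemidef :=
  s8OM_psd _ fun x => s8ev_real v x

lemma psd_sub (v w : V) : (s8OM (s8ev v - s8ev w)).PosSemidef :=
  s8OM_psd _ fun x => by simp only [Pi.sub_apply, map_sub, s8ev_real]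

lemma psd_add (v w : V) : (s8OM (s8ev v + s8ev w)).PosSemidef :=
  s8OM_psd _ fun x => by simp only [Pi.add_apply, map_add, s8ev_real]


lemma ite_one_zero_and (p q : Prop) [Decidable p] [Decidable q] :
    (if p ∧ q then (1:ℂ) else 0) = (if p then (1:ℂ) else 0) * (if q then (1:ℂ) else 0) := by
  split_ifs with h h1 h2 <;> simp_all

variable {α β : Type*} [Fintype α] [Fintype β] [DecidableEq α] [DecidableEq β]

lemma s8_horiz (i : α) (j l : β) :
    s8OM (s8ev ((i,j) : α × β) - s8ev (i,l)) = s8OM (s8ev i) ⊗ₖ s8OM (s8ev j - s8ev l) := by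
  ext ⟨p1, p2⟩ ⟨q1, q2⟩
  simp only [s8OM, s8ev, vecMulVec_apply, kroneckerMap_apply, Pi.sub_apply,
    Prod.mk.injEq, ite_one_zero_and]
  ring

lemma s8_vert (i k : α) (j : β) :
    s8OM (s8ev ((i,j) : α × β) - s8ev (k,j)) = s8OM (s8ev i - s8ev k) ⊗ₖ s8OM (s8ev j) := by
  ext ⟨p1, p2⟩ ⟨q1, q2⟩
  simp only [s8OM, s8ev, vecMulVec_apply, kroneckerMap_apply, Pi.sub_apply,
    Prod.mk.injEq, ite_one_zero_and]
  ring

lemma s8_diag (i k : α) (j l : β) :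
    s8OM (s8ev ((i,j) : α × β) - s8ev (k,l)) + s8OM (s8ev ((k,j) : α × β) - s8ev (i,l)) =
      (((1:ℝ)/2 : ℝ) : ℂ) • (s8OM (s8ev i - s8ev k) ⊗ₖ s8OM (s8ev j + s8ev l)) +
      (((1:ℝ)/2 : ℝ) : ℂ) • (s8OM (s8ev i + s8ev k) ⊗ₖ s8OM (s8ev j - s8ev l)) := by
  ext ⟨p1, p2⟩ ⟨q1, q2⟩
  simp only [s8OM, s8ev, vecMulVec_apply, kroneckerMap_apply, Pi.sub_apply, Pi.add_apply,
    Matrix.add_apply, Matrix.smul_apply, Prod.mk.injEq, ite_one_zero_and, smul_eq_mul,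
    Complex.ofReal_div, Complex.ofReal_one, Complex.ofReal_ofNat]
  ring

section lap
variable {V : Type*} [Fintype V] [DecidableEq V]
lemma s8sum_diag (c : V → ℂ) (x y : V) :
    (∑ v : V, c v * ((if x = v then (1:ℂ) else 0) * (if y = v then (1:ℂ) else 0))) =
      if x = y then c x else 0 := by
  rw [Finset.sum_eq_single x]
  · by_cases h : x = y <;> simp [h, eq_comm]
  · intro v _ hv
    simp [Ne.symm hv]
  · simp

lemma s8sum_off (G : SimpleGraph V) [DecidableRel G.Adj] (x y : V) :
    (∑ v : V, ∑ w : V, (if G.Adj v w then (1:ℂ) else 0) *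
      ((if x = v then (1:ℂ) else 0) * (if y = w then (1:ℂ) else 0))) =
      if G.Adj x y then (1:ℂ) else 0 := by
  rw [Finset.sum_eq_single x]
  · rw [Finset.sum_eq_single y]
    · simp
    · intro w _ hw; simp [Ne.symm hw]
    · simp
  · intro v _ hv
    simp [Ne.symm hv]
  · simp

lemma s8lap_decomp (G : SimpleGraph V) [DecidableRel G.Adj] :
    (2:ℂ) • G.lapMatrix ℂ =
      ∑ p ∈ Finset.univ.filter (fun p : V × V => G.Adj p.1 p.2),
        s8OM (s8ev p.1 - s8ev p.2) := by
  ext x y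
  rw [Matrix.smul_apply, Matrix.sum_apply]
  rw [Finset.sum_filter, Fintype.sum_prod_type]
  have hterm : ∀ v w : V,
      (if G.Adj v w then s8OM (s8ev v - s8ev w) x y else 0) =
        (if G.Adj v w then (1:ℂ) else 0) *
          ((if x = v then (1:ℂ) else 0) * (if y = v then (1:ℂ) else 0))
      + (if G.Adj v w then (1:ℂ) else 0) *
          ((if x = w then (1:ℂ) else 0) * (if y = w then (1:ℂ) else 0))
      - ((if G.Adj v w then (1:ℂ) else 0) *
          ((if x = v then (1:ℂ) else 0) * (if y = w then (1:ℂ) else 0))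
        + (if G.Adj w v then (1:ℂ) else 0) *
          ((if x = w then (1:ℂ) else 0) * (if y = v then (1:ℂ) else 0))) := by
    intro v w
    by_cases h : G.Adj v w
    · simp only [h, h.symm, if_true, s8OM, s8ev, vecMulVec_apply, Pi.sub_apply]
      ring
    · have h' : ¬ G.Adj w v := fun hc => h hc.symm
      simp [h, h', s8OM, s8ev]
  simp only [hterm]
  simp only [Finset.sum_sub_distrib, Finset.sum_add_distrib]
  have e1 : (∑ v : V, ∑ w : V, (if G.Adj v w then (1:ℂ) else 0) *
      ((if x = v then (1:ℂ) else 0) * (if y = v then (1:ℂ) else 0))) =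
      if x = y then (G.degree x : ℂ) else 0 := by
    rw [← s8sum_diag (fun v => (G.degree v : ℂ)) x y]
    refine Finset.sum_congr rfl fun v _ => ?_
    rw [← Finset.sum_mul, ← SimpleGraph.degree_eq_sum_if_adj]
  have e2 : (∑ v : V, ∑ w : V, (if G.Adj v w then (1:ℂ) else 0) *
      ((if x = w then (1:ℂ) else 0) * (if y = w then (1:ℂ) else 0))) =
      if x = y then (G.degree x : ℂ) else 0 := by
    rw [Finset.sum_comm]
    rw [← s8sum_diag (fun v => (G.degree v : ℂ)) x y]
    refine Finset.sum_congr rfl fun w _ => ?_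
    have hdw : (∑ v : V, if G.Adj v w then (1:ℂ) else 0) = (G.degree w : ℂ) := by
      rw [SimpleGraph.degree_eq_sum_if_adj]
      exact Finset.sum_congr rfl fun v _ => if_congr (G.adj_comm v w) rfl rfl
    rw [← Finset.sum_mul, hdw]
  have e3 := s8sum_off G x y
  have e4 : (∑ v : V, ∑ w : V, (if G.Adj w v then (1:ℂ) else 0) *
      ((if x = w then (1:ℂ) else 0) * (if y = v then (1:ℂ) else 0))) =
      if G.Adj x y then (1:ℂ) else 0 := by
    rw [Finset.sum_comm]
    exact s8sum_off G x y
  rw [e1, e2, e3, e4]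
  simp only [SimpleGraph.lapMatrix, Matrix.sub_apply, SimpleGraph.degMatrix,
    Matrix.diagonal_apply, SimpleGraph.adjMatrix_apply]
  by_cases h : x = y <;> by_cases h2 : G.Adj x y <;> simp [h, h2] <;> ring
end lap
end aux

lemma sep_zero {a b : ℕ} : MatSeparable (0 : Matrix (Fin a × Fin b) (Fin a × Fin b) ℂ) :=
  ⟨0, ![], ![], by simp, by simp, by simp⟩

lemma sep_add {a b : ℕ} {ρ σ : Matrix (Fin a × Fin b) (Fin a × Fin b) ℂ}
    (hρ : MatSeparable ρ) (hσ : MatSeparable σ) : MatSeparable (ρ + σ) := by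
  obtain ⟨n, A, B, hA, hB, hρ⟩ := hρ
  obtain ⟨m, C, D, hC, hD, hσ⟩ := hσ
  refine ⟨n + m, Fin.addCases A C, Fin.addCases B D, ?_, ?_, ?_⟩
  · intro i
    refine Fin.addCases (fun j => ?_) (fun j => ?_) i <;> simp [hA, hC]
  · intro i
    refine Fin.addCases (fun j => ?_) (fun j => ?_) i <;> simp [hB, hD]
  · rw [Fin.sum_univ_add]
    simp only [Fin.addCases_left, Fin.addCases_right]
    rw [hρ, hσ]

lemma psd_real_smul {V : Type*} [Fintype V] {M : Matrix V V ℂ} (hM : M.PosSemidef)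
    {c : ℝ} (hc : 0 ≤ c) : ((c : ℂ) • M).PosSemidef := by
  rw [posSemidef_iff_dotProduct_mulVec]
  constructor
  · ext x y
    simp only [conjTranspose_apply, Matrix.smul_apply, star_smul, smul_eq_mul]
    rw [star_mul', show star ((c:ℂ)) = (c:ℂ) by simp, ← conjTranspose_apply, hM.1]
  · intro x
    rw [smul_mulVec, dotProduct_smul]
    exact smul_nonneg (by exact_mod_cast hc) (hM.dotProduct_mulVec_nonneg x)

lemma sep_kron_smul {a b : ℕ} {X : Matrix (Fin a) (Fin a) ℂ} {Y : Matrix (Fin b) (Fin b) ℂ}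
    (hX : X.PosSemidef) (hY : Y.PosSemidef) {c : ℝ} (hc : 0 ≤ c) :
    MatSeparable ((c : ℂ) • (X ⊗ₖ Y)) := by
  refine ⟨1, ![(c:ℂ) • X], ![Y], fun i => ?_, fun i => ?_, ?_⟩
  · fin_cases i; exact psd_real_smul hX hc
  · fin_cases i; exact hY
  · simp [smul_kronecker]

lemma sep_kron {a b : ℕ} {X : Matrix (Fin a) (Fin a) ℂ} {Y : Matrix (Fin b) (Fin b) ℂ}
    (hX : X.PosSemidef) (hY : Y.PosSemidef) : MatSeparable (X ⊗ₖ Y) := by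
  have := sep_kron_smul hX hY (c := 1) zero_le_one
  simpa using this

lemma sep_smul {a b : ℕ} {ρ : Matrix (Fin a × Fin b) (Fin a × Fin b) ℂ}
    (hρ : MatSeparable ρ) {c : ℝ} (hc : 0 ≤ c) : MatSeparable ((c : ℂ) • ρ) := by
  obtain ⟨n, A, B, hA, hB, h⟩ := hρ
  refine ⟨n, fun i => (c:ℂ) • A i, B, fun i => psd_real_smul (hA i) hc, hB, ?_⟩
  rw [h, Finset.smul_sum]
  exact Finset.sum_congr rfl fun i _ => (smul_kronecker _ _ _).symm

lemma sep_sum {a b : ℕ} {ι : Type*} (s : Finset ι)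
    (f : ι → Matrix (Fin a × Fin b) (Fin a × Fin b) ℂ)
    (h : ∀ i ∈ s, MatSeparable (f i)) : MatSeparable (∑ i ∈ s, f i) :=
  Finset.sum_induction f MatSeparable (fun _ _ => sep_add) sep_zero h

theorem statement8 {a b : ℕ} (G : SimpleGraph (Fin a × Fin b)) [DecidableRel G.Adj]
    (hm : 1 ≤ G.edgeFinset.card)
    (hpair : ∀ v w : Fin a × Fin b, G.Adj v w → v.1 ≠ w.1 → v.2 ≠ w.2 →
      G.Adj (w.1, v.2) (v.1, w.2)) :
    MatSeparable (densityMatrix G) := by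
  classical
  set S : Finset ((Fin a × Fin b) × (Fin a × Fin b)) := Finset.univ.filter (fun p : (Fin a × Fin b) × (Fin a × Fin b) => G.Adj p.1 p.2) with hS
  set f : (Fin a × Fin b) × (Fin a × Fin b) → Matrix (Fin a × Fin b) (Fin a × Fin b) ℂ := fun p => s8OM (s8ev p.1 - s8ev p.2) with hf
  set σ : (Fin a × Fin b) × (Fin a × Fin b) → (Fin a × Fin b) × (Fin a × Fin b) := fun p => ((p.2.1, p.1.2), (p.1.1, p.2.2)) with hσ
  have hσmem : ∀ p ∈ S, σ p ∈ S := by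
    rintro ⟨⟨i, j⟩, ⟨k, l⟩⟩ hp
    simp only [hS, Finset.mem_filter, Finset.mem_univ, true_and] at hp ⊢
    by_cases h1 : i = k
    · subst h1; exact hp
    by_cases h2 : j = l
    · subst h2; exact hp.symm
    exact hpair (i, j) (k, l) hp h1 h2
  have hσσ : ∀ p ∈ S, σ (σ p) = p := by rintro ⟨⟨i, j⟩, ⟨k, l⟩⟩ _; rfl
  have hreidx : ∑ p ∈ S, f (σ p) = ∑ p ∈ S, f p :=
    Finset.sum_nbij' σ σ hσmem hσmem hσσ hσσ (fun p _ => rfl)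
  have hsplit : ∑ p ∈ S, f p = ((1:ℂ)/2) • ∑ p ∈ S, (f p + f (σ p)) := by
    rw [Finset.sum_add_distrib, hreidx, ← two_smul ℂ, smul_smul]
    norm_num
  have hpairsep : ∀ p ∈ S, MatSeparable (f p + f (σ p)) := by
    rintro ⟨⟨i, j⟩, ⟨k, l⟩⟩ hp
    show MatSeparable (s8OM (s8ev (i,j) - s8ev (k,l)) + s8OM (s8ev (k,j) - s8ev (i,l)))
    by_cases h1 : i = k
    · subst h1
      rw [s8_horiz]
      exact sep_add (sep_kron (psd_e i) (psd_sub j l)) (sep_kron (psd_e i) (psd_sub j l))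
    by_cases h2 : j = l
    · subst h2
      rw [s8_vert, s8_vert]
      exact sep_add (sep_kron (psd_sub i k) (psd_e j)) (sep_kron (psd_sub k i) (psd_e j))
    rw [s8_diag]
    exact sep_add (sep_kron_smul (psd_sub i k) (psd_add j l) (by norm_num))
      (sep_kron_smul (psd_add i k) (psd_sub j l) (by norm_num))
  have hlap : G.lapMatrix ℂ = ((1:ℂ)/2) • ∑ p ∈ S, f p := by
    rw [← s8lap_decomp G, smul_smul]
    norm_num
  have hdm : densityMatrix G =
      (Complex.ofReal ((1:ℝ)/(8 * (G.edgeFinset.card : ℝ)))) • ∑ p ∈ S, (f p + f (σ p)) := by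
    rw [densityMatrix, hlap, hsplit, smul_smul, smul_smul]
    congr 1
    push_cast
    ring
  rw [hdm]
  have h0 : (0:ℝ) < (G.edgeFinset.card : ℝ) := by
    have : (0:ℕ) < G.edgeFinset.card := hm
    exact_mod_cast this
  exact sep_smul (sep_sum S _ hpairsep) (by positivity)
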